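/- F is differentiable at every tensor M ∈ ℝ^{{1,…,L}×S^{T+1}}, and its gradient is ∇F(M) = C(M) + E(M), where E(M)(ℓ, x_0,…,x_T) = Σ_{i=0}^{T−1} E_i(ℓ, x_i) with E_i(ℓ, y) = Σ_{m=1}^{L} Σ_{(z,w)∈S×S} ∇W_{mℓ}(z − y)ᵀ (w − z + (1/T) Σ_{n=1}^{L} [∇W_{mn} * P_{−1,i}(M)(n,·)](z) − (1/T) b_m(z)) · P_{−1,i,i+1}(M)(m, z, w). -/

import Mathlib

open scoped BigOperators Classical

noncomputable section

namespace Stmt2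

variable {d T L : ℕ} {S : Finset (EuclideanSpace ℝ (Fin d))}

/-- The marginal over species and the `i`-th coordinate:
`P_{-1,i}(M)(ℓ,y) = Σ_{x : x_i = y} M(ℓ,x)`. -/
def marg (M : Fin L × (Fin (T + 1) → {x // x ∈ S}) → ℝ) (i : Fin (T + 1))
    (ℓ : Fin L) (y : {x // x ∈ S}) : ℝ :=
  ∑ x : Fin (T + 1) → {x // x ∈ S}, if x i = y then M (ℓ, x) else 0

/-- `P_{-1,i,i+1}(M)(ℓ,y,z) = Σ_{x : x_i = y, x_{i+1} = z} M(ℓ,x)`. -/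
def margPair (M : Fin L × (Fin (T + 1) → {x // x ∈ S}) → ℝ) (i : Fin T)
    (ℓ : Fin L) (y z : {x // x ∈ S}) : ℝ :=
  ∑ x : Fin (T + 1) → {x // x ∈ S},
    if x i.castSucc = y ∧ x i.succ = z then M (ℓ, x) else 0

/-- `[∇W_{ℓm} * P_{-1,i}(M)(m,·)](y) = Σ_{z ∈ S} ∇W_{ℓm}(y - z) P_{-1,i}(M)(m,z)`. -/
def convW (W : Fin L → Fin L → EuclideanSpace ℝ (Fin d) → ℝ)
    (M : Fin L × (Fin (T + 1) → {x // x ∈ S}) → ℝ) (ℓ m : Fin L)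
    (i : Fin (T + 1)) (y : EuclideanSpace ℝ (Fin d)) : EuclideanSpace ℝ (Fin d) :=
  ∑ z : {x // x ∈ S}, marg M i m z • gradient (W ℓ m) (y - (z : EuclideanSpace ℝ (Fin d)))

/-- The multi-species cost tensor `C(M)(ℓ,x_0,…,x_T) = (1/T) Σ_i V_ℓ(x_i)
 + Σ_i (T/2) ‖x_{i+1} - x_i + (1/T) Σ_m [∇W_{ℓm} * P_{-1,i}(M)(m,·)](x_i) - (1/T) b_ℓ(x_i)‖²`. -/
def costC (W : Fin L → Fin L → EuclideanSpace ℝ (Fin d) → ℝ)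
    (b : Fin L → EuclideanSpace ℝ (Fin d) → EuclideanSpace ℝ (Fin d))
    (V : Fin L → EuclideanSpace ℝ (Fin d) → ℝ)
    (M : Fin L × (Fin (T + 1) → {x // x ∈ S}) → ℝ)
    (p : Fin L × (Fin (T + 1) → {x // x ∈ S})) : ℝ :=
  (1 / (T : ℝ)) * ∑ i : Fin T, V p.1 (p.2 i.castSucc : EuclideanSpace ℝ (Fin d))
  + ∑ i : Fin T, ((T : ℝ) / 2) *
    ‖(p.2 i.succ : EuclideanSpace ℝ (Fin d)) - (p.2 i.castSucc : EuclideanSpace ℝ (Fin d))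
      + (1 / (T : ℝ)) • ∑ m : Fin L,
          convW W M p.1 m i.castSucc (p.2 i.castSucc : EuclideanSpace ℝ (Fin d))
      - (1 / (T : ℝ)) • b p.1 (p.2 i.castSucc : EuclideanSpace ℝ (Fin d))‖ ^ 2

/-- `F(M) = ⟨C(M), M⟩ = Σ_{ℓ,x} C(M)(ℓ,x) M(ℓ,x)`. -/
def Ffun (W : Fin L → Fin L → EuclideanSpace ℝ (Fin d) → ℝ)
    (b : Fin L → EuclideanSpace ℝ (Fin d) → EuclideanSpace ℝ (Fin d))
    (V : Fin L → EuclideanSpace ℝ (Fin d) → ℝ)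
    (M : Fin L × (Fin (T + 1) → {x // x ∈ S}) → ℝ) : ℝ :=
  ∑ p : Fin L × (Fin (T + 1) → {x // x ∈ S}), costC W b V M p * M p

/-- `E_i(ℓ,y) = Σ_{m} Σ_{(z,w) ∈ S×S} ∇W_{mℓ}(z-y)ᵀ
 (w - z + (1/T) Σ_n [∇W_{mn} * P_{-1,i}(M)(n,·)](z) - (1/T) b_m(z)) P_{-1,i,i+1}(M)(m,z,w)`. -/
def Ei (W : Fin L → Fin L → EuclideanSpace ℝ (Fin d) → ℝ)
    (b : Fin L → EuclideanSpace ℝ (Fin d) → EuclideanSpace ℝ (Fin d))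
    (M : Fin L × (Fin (T + 1) → {x // x ∈ S}) → ℝ)
    (i : Fin T) (ℓ : Fin L) (y : EuclideanSpace ℝ (Fin d)) : ℝ :=
  ∑ m : Fin L, ∑ z : {x // x ∈ S}, ∑ w : {x // x ∈ S},
    (inner ℝ (gradient (W m ℓ) ((z : EuclideanSpace ℝ (Fin d)) - y))
      ((w : EuclideanSpace ℝ (Fin d)) - (z : EuclideanSpace ℝ (Fin d))
        + (1 / (T : ℝ)) • ∑ n : Fin L, convW W M m n i.castSucc (z : EuclideanSpace ℝ (Fin d))
        - (1 / (T : ℝ)) • b m (z : EuclideanSpace ℝ (Fin d))) : ℝ)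
    * margPair M i m z w

/-- `E(M)(ℓ,x_0,…,x_T) = Σ_{i=0}^{T-1} E_i(ℓ,x_i)`. -/
def Etens (W : Fin L → Fin L → EuclideanSpace ℝ (Fin d) → ℝ)
    (b : Fin L → EuclideanSpace ℝ (Fin d) → EuclideanSpace ℝ (Fin d))
    (M : Fin L × (Fin (T + 1) → {x // x ∈ S}) → ℝ)
    (p : Fin L × (Fin (T + 1) → {x // x ∈ S})) : ℝ :=
  ∑ i : Fin T, Ei W b M i p.1 (p.2 i.castSucc : EuclideanSpace ℝ (Fin d))

/-! The gradients `∇W` are only evaluated at differences of grid points, so the interaction term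
`Σ_m [∇W_{ℓm} * P_{-1,i}(N)(m,·)]` is linear in `N` and `F` is a polynomial in `N`: each entry
of `C(N)` is a constant plus a sum of terms `(T/2)‖r‖²` with `r` affine in `N`.
The product rule gives `∇F(M)(q) = C(M)(q) + Σ_{p,i} M(p) ⟨r_{p,i}, ∇W_{p_ℓ q_ℓ}(p_i - q_i)⟩`.
Grouping the paths `p` by species `m` and positions `(z, w) = (p_i, p_{i+1})` turns the sum
over `p` into a sum against the pair marginal `P_{-1,i,i+1}(M)(m,z,w)`, which is `E(M)(q)`. -/

local notation "ℝᵈ" => EuclideanSpace ℝ (Fin d)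

local notation "Idx" => Fin L × (Fin (T + 1) → {x // x ∈ S})

section Marginals

variable {E : Type*} [AddCommGroup E] [Module ℝ E]

theorem sum_marg_smul (N : Idx → ℝ) (i : Fin (T + 1)) (ℓ : Fin L) (g : {x // x ∈ S} → E) :
    ∑ z, marg N i ℓ z • g z = ∑ x : Fin (T + 1) → {x // x ∈ S}, N (ℓ, x) • g (x i) := by
  simp only [marg, Finset.sum_smul, ite_smul, zero_smul]
  rw [Finset.sum_comm]
  simp

theorem sum_margPair_mul (N : Idx → ℝ) (i : Fin T) (ℓ : Fin L)
    (g : {x // x ∈ S} → {x // x ∈ S} → ℝ) :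
    ∑ z, ∑ w, g z w * margPair N i ℓ z w
      = ∑ x : Fin (T + 1) → {x // x ∈ S}, N (ℓ, x) * g (x i.castSucc) (x i.succ) := by
  simp only [margPair, Finset.mul_sum, mul_ite, mul_zero, ite_and]
  rw [Finset.sum_congr rfl fun z _ => Finset.sum_comm, Finset.sum_comm]
  refine Finset.sum_congr rfl fun x _ => ?_
  simp [mul_comm]

end Marginals

section Derivative

variable (W : Fin L → Fin L → EuclideanSpace ℝ (Fin d) → ℝ)
  (b : Fin L → EuclideanSpace ℝ (Fin d) → EuclideanSpace ℝ (Fin d))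

theorem sum_convW_eq (N : Idx → ℝ) (ℓ : Fin L) (i : Fin (T + 1)) (y : ℝᵈ) :
    ∑ m, convW W N ℓ m i y = ∑ q : Idx, N q • gradient (W ℓ q.1) (y - (q.2 i : ℝᵈ)) := by
  simp only [convW, sum_marg_smul, Fintype.sum_prod_type]

def interactionCLM (ℓ : Fin L) (i : Fin (T + 1)) (y : ℝᵈ) : EuclideanSpace ℝ Idx →L[ℝ] ℝᵈ :=
  ∑ q : Idx, (EuclideanSpace.proj q).smulRight (gradient (W ℓ q.1) (y - (q.2 i : ℝᵈ)))

theorem interactionCLM_apply (ℓ : Fin L) (i : Fin (T + 1)) (y : ℝᵈ) (N : EuclideanSpace ℝ Idx) :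
    interactionCLM W ℓ i y N = ∑ m, convW W N ℓ m i y := by
  simp [interactionCLM, sum_convW_eq]

def residual (N : Idx → ℝ) (p : Idx) (i : Fin T) : ℝᵈ :=
  (p.2 i.succ : ℝᵈ) - (p.2 i.castSucc : ℝᵈ)
    + (1 / (T : ℝ)) • ∑ m, convW W N p.1 m i.castSucc (p.2 i.castSucc : ℝᵈ)
    - (1 / (T : ℝ)) • b p.1 (p.2 i.castSucc : ℝᵈ)

theorem hasFDerivAt_residual (M : EuclideanSpace ℝ Idx) (p : Idx) (i : Fin T) :
    HasFDerivAt (fun N : EuclideanSpace ℝ Idx => residual W b N p i)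
      ((1 / (T : ℝ)) • interactionCLM W p.1 i.castSucc (p.2 i.castSucc : ℝᵈ)) M := by
  refine ((((1 / (T : ℝ)) • interactionCLM W p.1 i.castSucc (p.2 i.castSucc : ℝᵈ)).hasFDerivAt
    |>.const_add ((p.2 i.succ : ℝᵈ) - (p.2 i.castSucc : ℝᵈ))).sub_const
    ((1 / (T : ℝ)) • b p.1 (p.2 i.castSucc : ℝᵈ))).congr_of_eventuallyEq (.of_forall fun N => ?_)
  simp [residual, interactionCLM_apply]

def costDeriv (M : Idx → ℝ) (p : Idx) : EuclideanSpace ℝ Idx →L[ℝ] ℝ :=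
  ∑ i : Fin T,
    (innerSL ℝ (residual W b M p i)).comp (interactionCLM W p.1 i.castSucc (p.2 i.castSucc : ℝᵈ))

theorem hasFDerivAt_costC (V : Fin L → ℝᵈ → ℝ) (M : EuclideanSpace ℝ Idx) (p : Idx) :
    HasFDerivAt (fun N : EuclideanSpace ℝ Idx => costC W b V N p) (costDeriv W b M p) M := by
  have hterm (i : Fin T) : HasFDerivAt
      (fun N : EuclideanSpace ℝ Idx => ((T : ℝ) / 2) * ‖residual W b N p i‖ ^ 2)
      ((innerSL ℝ (residual W b M p i)).comp
        (interactionCLM W p.1 i.castSucc (p.2 i.castSucc : ℝᵈ))) M := by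
    have hT : (T : ℝ) ≠ 0 := Nat.cast_ne_zero.mpr i.pos.ne'
    refine ((hasFDerivAt_residual W b M p i).norm_sq.const_mul ((T : ℝ) / 2)).congr_fderiv ?_
    ext H
    simp only [one_div, ContinuousLinearMap.comp_smulₛₗ, map_inv₀, map_natCast,
      smul_apply, ContinuousLinearMap.comp_apply, coe_innerSL_apply,
      smul_eq_mul, nsmul_eq_mul, Nat.cast_ofNat]
    field_simp
  exact (HasFDerivAt.fun_sum fun i _ => hterm i).const_add _

theorem costDeriv_apply (M H : EuclideanSpace ℝ Idx) (p : Idx) :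
    costDeriv W b M p H = ∑ i : Fin T, ∑ q : Idx, H q * inner ℝ (residual W b M p i)
      (gradient (W p.1 q.1) ((p.2 i.castSucc : ℝᵈ) - q.2 i.castSucc)) := by
  simp [costDeriv, interactionCLM]

theorem Etens_eq (M : Idx → ℝ) (q : Idx) :
    Etens W b M q = ∑ i : Fin T, ∑ p : Idx, M p * inner ℝ
      (gradient (W p.1 q.1) ((p.2 i.castSucc : ℝᵈ) - q.2 i.castSucc)) (residual W b M p i) := by
  simp only [Etens, Ei, sum_margPair_mul, Fintype.sum_prod_type]
  rfl

theorem sum_mul_costDeriv (M H : EuclideanSpace ℝ Idx) :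
    ∑ p : Idx, M p * costDeriv W b M p H = ∑ q : Idx, Etens W b M q * H q := by
  simp only [costDeriv_apply, Etens_eq, Finset.mul_sum, Finset.sum_mul]
  rw [Finset.sum_comm]
  conv_rhs => rw [Finset.sum_comm]
  refine Finset.sum_congr rfl fun i _ => Finset.sum_comm.trans
    (Finset.sum_congr rfl fun q _ => Finset.sum_congr rfl fun p _ => ?_)
  rw [real_inner_comm]
  ring

theorem hasGradientAt_Ffun (V : Fin L → ℝᵈ → ℝ) (M : EuclideanSpace ℝ Idx) :
    HasGradientAt (fun N : EuclideanSpace ℝ Idx => Ffun W b V N)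
      (WithLp.toLp 2 fun p => costC W b V M p + Etens W b M p) M := by
  have hF : HasFDerivAt (fun N : EuclideanSpace ℝ Idx => Ffun W b V N)
      (∑ p : Idx, (costC W b V M p • EuclideanSpace.proj p + M p • costDeriv W b M p)) M :=
    HasFDerivAt.fun_sum fun p _ =>
      (hasFDerivAt_costC W b V M p).mul (EuclideanSpace.proj (𝕜 := ℝ) p).hasFDerivAt
  rw [hasGradientAt_iff_hasFDerivAt]
  refine hF.congr_fderiv (ContinuousLinearMap.ext fun H => ?_)
  simp [Finset.sum_add_distrib, sum_mul_costDeriv, PiLp.inner_apply, add_mul, mul_comm]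

end Derivative

theorem statement_2_general
    (W : Fin L → Fin L → EuclideanSpace ℝ (Fin d) → ℝ)
    (b : Fin L → EuclideanSpace ℝ (Fin d) → EuclideanSpace ℝ (Fin d))
    (V : Fin L → EuclideanSpace ℝ (Fin d) → ℝ)
    (M : EuclideanSpace ℝ (Fin L × (Fin (T + 1) → {x // x ∈ S}))) :
    DifferentiableAt ℝ
      (fun N : EuclideanSpace ℝ (Fin L × (Fin (T + 1) → {x // x ∈ S})) => Ffun W b V N) M ∧
    ∀ p : Fin L × (Fin (T + 1) → {x // x ∈ S}),
      gradient
        (fun N : EuclideanSpace ℝ (Fin L × (Fin (T + 1) → {x // x ∈ S})) => Ffun W b V N) M p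
        = costC W b V M p + Etens W b M p := by
  have hF := hasGradientAt_Ffun W b V M
  exact ⟨hF.differentiableAt, fun p => by rw [hF.gradient]⟩

/-- `F` is differentiable at every multi-species tensor `M`, with
gradient `∇F(M) = C(M) + E(M)`. -/
theorem statement_2 (hT : 1 ≤ T) (hL : 1 ≤ L) (hS : S.Nonempty)
    (W : Fin L → Fin L → EuclideanSpace ℝ (Fin d) → ℝ)
    (hW : ∀ ℓ m, ContDiff ℝ 1 (W ℓ m))
    (hWsymm : ∀ ℓ m, W ℓ m = W m ℓ)
    (hWeven : ∀ ℓ m x, W ℓ m x = W ℓ m (-x))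
    (b : Fin L → EuclideanSpace ℝ (Fin d) → EuclideanSpace ℝ (Fin d))
    (hb : ∀ ℓ, Continuous (b ℓ))
    (V : Fin L → EuclideanSpace ℝ (Fin d) → ℝ)
    (M : EuclideanSpace ℝ (Fin L × (Fin (T + 1) → {x // x ∈ S}))) :
    DifferentiableAt ℝ
      (fun N : EuclideanSpace ℝ (Fin L × (Fin (T + 1) → {x // x ∈ S})) => Ffun W b V N) M ∧
    ∀ p : Fin L × (Fin (T + 1) → {x // x ∈ S}),
      gradient
        (fun N : EuclideanSpace ℝ (Fin L × (Fin (T + 1) → {x // x ∈ S})) => Ffun W b V N) M p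
        = costC W b V M p + Etens W b M p :=
  statement_2_general W b V M

end Stmt2
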